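/- If G is a connected graph such that every two nonadjacent vertices u, v satisfy d(u) + d(v) ≥ n − 1 where n is the number of vertices, then the edge-connectivity of G equals its minimum degree. -/

import Mathlib

/-!
Deleting the `δ` edges at a vertex of minimum degree disconnects `G`, so `κ'(G) ≤ δ`.
Conversely, let `F` disconnect `G` and let `T` be a component of `G - F`, so that every edge
of `G` leaving `T` lies in `F`. If every vertex of `T` has a neighbour outside `T`, then a vertex
of `T` has at least `δ + 1 - |T|` such neighbours, and counting the edges leaving `T` gives
`|F| ≥ max (|T|, |T| (δ + 1 - |T|)) ≥ δ`. The same holds for the complement of `T`. Otherwise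
there are `u ∈ T` and `v ∉ T` whose neighbourhoods stay on their own side; they are nonadjacent
and `d(u) + d(v) ≤ (|T| - 1) + (n - |T| - 1) = n - 2`, contradicting the degree condition.
-/

open SimpleGraph

/-- The edge-connectivity of `G`: the minimum number of edges whose deletion disconnects `G`. -/
noncomputable def edgeConn {V : Type*} [Fintype V] (G : SimpleGraph V) : ℕ :=
  sInf {k | ∃ F : Finset (Sym2 V), ↑F ⊆ G.edgeSet ∧ F.card = k ∧ ¬ (G.deleteEdges ↑F).Connected}

/-- The minimum degree of `G`. -/
noncomputable def minDeg {V : Type*} [Fintype V] (G : SimpleGraph V) : ℕ :=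
  sInf {d | ∃ v : V, d = (G.neighborSet v).ncard}

open Finset

namespace SimpleGraph

section Cut

variable {V : Type*} (G : SimpleGraph V)

lemma mem_of_adj_of_reachable_of_not_reachable {F : Set (Sym2 V)} {a x y : V}
    (hxy : G.Adj x y) (hx : (G.deleteEdges F).Reachable a x)
    (hy : ¬(G.deleteEdges F).Reachable a y) : s(x, y) ∈ F := by
  by_contra hF
  exact hy (hx.trans (deleteEdges_adj.mpr ⟨hxy, hF⟩).reachable)

lemma not_connected_deleteEdges_incidenceSet [Nontrivial V] (v : V) :
    ¬(G.deleteEdges (G.incidenceSet v)).Connected := by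
  intro hc
  obtain ⟨w, hw⟩ := exists_ne v
  obtain ⟨p⟩ := hc.preconnected v w
  cases p with
  | nil => exact hw rfl
  | cons hadj _ =>
    exact (deleteEdges_adj.mp hadj).2 ⟨(deleteEdges_adj.mp hadj).1, Sym2.mem_mk_left _ _⟩

end Cut

variable {V : Type*} [Fintype V] (G : SimpleGraph V)

lemma ncard_neighborSet_eq_degree [DecidableRel G.Adj] (v : V) :
    (G.neighborSet v).ncard = G.degree v := by
  rw [← Nat.card_coe_set_eq, Nat.card_eq_fintype_card, card_neighborSet_eq_degree]

lemma minDeg_eq_minDegree [DecidableRel G.Adj] : minDeg G = G.minDegree := by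
  cases isEmpty_or_nonempty V
  · simp [minDeg, minDegree]
  · obtain ⟨v, hv⟩ := G.exists_minimal_degree_vertex
    refine le_antisymm (hv ▸ Nat.sInf_le ⟨v, (G.ncard_neighborSet_eq_degree v).symm⟩) ?_
    refine le_csInf ⟨_, v, rfl⟩ ?_
    rintro _ ⟨w, rfl⟩
    exact G.ncard_neighborSet_eq_degree w ▸ G.minDegree_le_degree w

lemma incidenceFinset_subset_edgeSet_and_not_connected [DecidableEq V] [DecidableRel G.Adj]
    [Nontrivial V] (v : V) :
    ↑(G.incidenceFinset v) ⊆ G.edgeSet ∧ ¬(G.deleteEdges ↑(G.incidenceFinset v)).Connected := by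
  rw [coe_incidenceFinset]
  exact ⟨G.incidenceSet_subset v, G.not_connected_deleteEdges_incidenceSet v⟩

lemma edgeConn_le_degree [DecidableEq V] [DecidableRel G.Adj] [Nontrivial V] (v : V) :
    edgeConn G ≤ G.degree v := by
  obtain ⟨hsub, hdis⟩ := G.incidenceFinset_subset_edgeSet_and_not_connected v
  exact G.card_incidenceFinset_eq_degree v ▸ Nat.sInf_le ⟨_, hsub, rfl, hdis⟩

lemma le_edgeConn [Nontrivial V] {k : ℕ}
    (hk : ∀ F : Finset (Sym2 V), ↑F ⊆ G.edgeSet → ¬(G.deleteEdges ↑F).Connected → k ≤ #F) :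
    k ≤ edgeConn G := by
  classical
  obtain ⟨v⟩ := ‹Nontrivial V›.to_nonempty
  obtain ⟨hsub, hdis⟩ := G.incidenceFinset_subset_edgeSet_and_not_connected v
  refine le_csInf ⟨_, _, hsub, rfl, hdis⟩ ?_
  rintro _ ⟨F, hF, rfl, hFdis⟩
  exact hk F hF hFdis

variable [DecidableEq V] [DecidableRel G.Adj]

lemma degree_le_card_sub_one_add_card_neighborFinset_sdiff {T : Finset V} {u : V}
    (hu : u ∈ T) : G.degree u ≤ #T - 1 + #(G.neighborFinset u \ T) := by
  have hsub : G.neighborFinset u ⊆ T.erase u ∪ (G.neighborFinset u \ T) := by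
    intro y hy
    by_cases hyT : y ∈ T
    · exact mem_union_left _
        (mem_erase.mpr ⟨(G.ne_of_adj ((G.mem_neighborFinset u y).mp hy)).symm, hyT⟩)
    · exact mem_union_right _ (mem_sdiff.mpr ⟨hy, hyT⟩)
  calc G.degree u = #(G.neighborFinset u) := (G.card_neighborFinset_eq_degree u).symm
    _ ≤ #(T.erase u ∪ (G.neighborFinset u \ T)) := card_le_card hsub
    _ ≤ #(T.erase u) + #(G.neighborFinset u \ T) := card_union_le _ _
    _ = #T - 1 + #(G.neighborFinset u \ T) := by rw [card_erase_of_mem hu]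

lemma sum_card_neighborFinset_sdiff_le_card {T : Finset V} {F : Finset (Sym2 V)}
    (hF : ∀ u ∈ T, ∀ y ∈ G.neighborFinset u \ T, s(u, y) ∈ F) :
    ∑ u ∈ T, #(G.neighborFinset u \ T) ≤ #F := by
  rw [← card_sigma]
  refine card_le_card_of_injOn (fun p => s(p.1, p.2)) (fun p hp => ?_) ?_
  · rw [mem_coe, mem_sigma] at hp
    exact hF _ hp.1 _ hp.2
  · rintro ⟨u, y⟩ hp ⟨u', y'⟩ hp' he
    rw [mem_coe, mem_sigma] at hp hp'
    obtain ⟨rfl, rfl⟩ | ⟨rfl, -⟩ := Sym2.eq_iff.mp he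
    · rfl
    · exact absurd hp.1 (mem_sdiff.mp hp'.2).2

lemma minDegree_le_sum_card_neighborFinset_sdiff {T : Finset V} (hT : T.Nonempty)
    (hout : ∀ u ∈ T, (G.neighborFinset u \ T).Nonempty) :
    G.minDegree ≤ ∑ u ∈ T, #(G.neighborFinset u \ T) := by
  by_cases hδ : G.minDegree ≤ #T
  · calc G.minDegree ≤ #T := hδ
      _ = ∑ _u ∈ T, 1 := card_eq_sum_ones T
      _ ≤ _ := sum_le_sum fun u hu => (hout u hu).card_pos
  · obtain ⟨k, hk⟩ : ∃ k, G.minDegree + 1 = #T + k :=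
      ⟨_, (Nat.add_sub_of_le (by omega)).symm⟩
    have hkT : ∀ u ∈ T, k ≤ #(G.neighborFinset u \ T) := fun u hu => by
      have := G.degree_le_card_sub_one_add_card_neighborFinset_sdiff hu
      have := G.minDegree_le_degree u
      have := hT.card_pos
      omega
    -- `#T * k - minDegree = (#T - 1) * (k - 1)`
    have hδk : G.minDegree ≤ #T * k := by
      obtain ⟨t, ht⟩ := Nat.exists_eq_add_of_lt hT.card_pos
      obtain ⟨j, rfl⟩ : ∃ j, k = j + 1 := ⟨k - 1, by omega⟩
      rw [ht] at hk ⊢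
      nlinarith
    calc G.minDegree ≤ #T * k := hδk
      _ = ∑ _u ∈ T, k := by rw [sum_const, smul_eq_mul]
      _ ≤ _ := sum_le_sum hkT

lemma minDegree_le_card_of_forall_neighborFinset_sdiff_nonempty {T : Finset V}
    {F : Finset (Sym2 V)} (hT : T.Nonempty) (hout : ∀ u ∈ T, (G.neighborFinset u \ T).Nonempty)
    (hF : ∀ u ∈ T, ∀ y ∈ G.neighborFinset u \ T, s(u, y) ∈ F) : G.minDegree ≤ #F :=
  (G.minDegree_le_sum_card_neighborFinset_sdiff hT hout).trans
    (G.sum_card_neighborFinset_sdiff_le_card hF)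

variable {G}

lemma forall_neighborFinset_sdiff_nonempty_or_compl
    (hore : ∀ u v, u ≠ v → ¬G.Adj u v → Fintype.card V - 1 ≤ G.degree u + G.degree v)
    {T : Finset V} (hT : T.Nonempty) (hTc : Tᶜ.Nonempty) :
    (∀ u ∈ T, (G.neighborFinset u \ T).Nonempty) ∨
      ∀ v ∈ Tᶜ, (G.neighborFinset v \ Tᶜ).Nonempty := by
  by_contra! ⟨⟨u, hu, hNu⟩, ⟨v, hv, hNv⟩⟩
  have hnadj : ¬G.Adj u v := fun hadj =>
    mem_compl.mp hv (sdiff_eq_empty_iff_subset.mp hNu ((G.mem_neighborFinset u v).mpr hadj))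
  have hdu := G.degree_le_card_sub_one_add_card_neighborFinset_sdiff hu
  have hdv := G.degree_le_card_sub_one_add_card_neighborFinset_sdiff hv
  rw [hNu, card_empty] at hdu
  rw [hNv, card_empty] at hdv
  have := hore u v (ne_of_mem_of_not_mem hu (mem_compl.mp hv)) hnadj
  have := card_add_card_compl T
  have := hT.card_pos
  have := hTc.card_pos
  omega

lemma minDegree_le_card_of_not_connected
    (hore : ∀ u v, u ≠ v → ¬G.Adj u v → Fintype.card V - 1 ≤ G.degree u + G.degree v)
    [Nonempty V] {F : Finset (Sym2 V)} (hdis : ¬(G.deleteEdges ↑F).Connected) :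
    G.minDegree ≤ #F := by
  obtain ⟨a, c, hac⟩ : ∃ a c, ¬(G.deleteEdges ↑F).Reachable a c := by
    by_contra! hreach
    exact hdis ⟨hreach⟩
  set T : Finset V := {x | (G.deleteEdges ↑F).Reachable a x}
  have hT : T.Nonempty := ⟨a, by simp [T]⟩
  have hTc : Tᶜ.Nonempty := ⟨c, by simpa [T] using hac⟩
  rcases forall_neighborFinset_sdiff_nonempty_or_compl hore hT hTc with hout | hout
  · refine G.minDegree_le_card_of_forall_neighborFinset_sdiff_nonempty hT hout ?_
    intro u hu y hy
    simp only [T, mem_sdiff, mem_filter, mem_univ, true_and, mem_neighborFinset] at hu hy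
    exact G.mem_of_adj_of_reachable_of_not_reachable hy.1 hu hy.2
  · refine G.minDegree_le_card_of_forall_neighborFinset_sdiff_nonempty hTc hout ?_
    intro v hv y hy
    simp only [T, mem_sdiff, mem_compl, mem_filter, mem_univ, true_and, mem_neighborFinset,
      not_not] at hv hy
    exact Sym2.eq_swap ▸ G.mem_of_adj_of_reachable_of_not_reachable hy.1.symm hy.2 hv

end SimpleGraph

theorem lesniak_edgeConn_eq_minDeg_general {V : Type*} [Fintype V] (G : SimpleGraph V)
    (hcard : 2 ≤ Fintype.card V)
    (h : ∀ u v : V, u ≠ v → ¬ G.Adj u v →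
      Fintype.card V - 1 ≤ (G.neighborSet u).ncard + (G.neighborSet v).ncard) :
    edgeConn G = minDeg G := by
  classical
  have : Nontrivial V := Fintype.one_lt_card_iff_nontrivial.mp hcard
  have hore : ∀ u v, u ≠ v → ¬G.Adj u v → Fintype.card V - 1 ≤ G.degree u + G.degree v := by
    simpa only [ncard_neighborSet_eq_degree] using h
  obtain ⟨v, hv⟩ := G.exists_minimal_degree_vertex
  rw [minDeg_eq_minDegree]
  exact le_antisymm (hv ▸ G.edgeConn_le_degree v)
    (G.le_edgeConn fun _ _ hdis => minDegree_le_card_of_not_connected hore hdis)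

/-- Lesniak: if every two distinct nonadjacent vertices have degree sum at least `n - 1`,
then `κ'(G) = δ(G)`. -/
theorem lesniak_edgeConn_eq_minDeg {V : Type*} [Fintype V] (G : SimpleGraph V)
    (hG : G.Connected) (hcard : 2 ≤ Fintype.card V)
    (h : ∀ u v : V, u ≠ v → ¬ G.Adj u v →
      Fintype.card V - 1 ≤ (G.neighborSet u).ncard + (G.neighborSet v).ncard) :
    edgeConn G = minDeg G :=
  lesniak_edgeConn_eq_minDeg_general G hcard h
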